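/- For every w ∈ W^B_m and every 1 ≤ k ≤ m, the identity φ_w x_k = x_{w(k)} φ_w holds in the VV algebra W_ν, where W^B_m acts on indices as signed permutations and one sets x_{1−l} := −x_l for the negative indices. -/

import Mathlib

open scoped TensorProduct

noncomputable section
namespace VVB

variable (k : Type) [Field k]

/-- The vertex set `I` of the quiver `Γ`: the `ℤ ⋊ ℤ₂`-orbit of `λ`. -/
def Iset (p lam : kˣ) : Set kˣ := {x | ∃ n : ℤ, x = p ^ (2 * n) * lam ∨ x = p ^ (2 * n) * lam⁻¹}

/-- The positive half `I⁺` of the vertex set. -/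
def Iplus (p lam : kˣ) : Set kˣ := {x | ∃ n : ℤ, x = p ^ (2 * n) * lam}

/-- The standing assumptions on the parameters: `char k ≠ 2`,
`p` is not a power of `q` and vice versa, `p ≠ ±1`, `±1 ∉ I` and `±p, ±q ∉ I`. -/
def Setting (p q lam : kˣ) : Prop :=
  ringChar k ≠ 2 ∧ (∀ n : ℤ, p ≠ q ^ n) ∧ (∀ n : ℤ, q ≠ p ^ n) ∧
  p ≠ 1 ∧ p ≠ -1 ∧ (1 : kˣ) ∉ Iset k p lam ∧ (-1 : kˣ) ∉ Iset k p lam ∧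
  p ∉ Iset k p lam ∧ (-p) ∉ Iset k p lam ∧ q ∉ Iset k p lam ∧ (-q) ∉ Iset k p lam

open Classical in
/-- The number of arrows `i → j` in the quiver `Γ` (there is one arrow `p²i → i` for each `i`). -/
def nArr (p i j : kˣ) : ℕ := if i = p ^ 2 * j then 1 else 0

/-- `^θℕI`: θ-symmetric finitely supported functions supported on `I`. -/
def ThetaNNI (p lam : kˣ) : Set (kˣ →₀ ℕ) :=
  {ν | (∀ i ∈ ν.support, (i : kˣ) ∈ Iset k p lam) ∧ ∀ i : kˣ, ν i = ν i⁻¹}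

/-- `ℕI⁺`: finitely supported functions supported on `I⁺`. -/
def NNIplus (p lam : kˣ) : Set (kˣ →₀ ℕ) :=
  {ν | ∀ i ∈ ν.support, (i : kˣ) ∈ Iplus k p lam}

/-- The height `|ν|`. -/
def ht (ν : kˣ →₀ ℕ) : ℕ := ν.sum fun _ n => n

open Classical in
/-- The positive part `ν⁺` of `ν ∈ ^θℕI`. -/
def posPart (p lam : kˣ) (ν : kˣ →₀ ℕ) : kˣ →₀ ℕ := ν.filter fun x => x ∈ Iplus k p lam

/-- The condition defining `^θI^ν`. -/
def seqCond (ν : kˣ →₀ ℕ) {m : ℕ} (i : Fin m → kˣ) : Prop :=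
  ν = ∑ l, (Finsupp.single (i l) 1 + Finsupp.single (i l)⁻¹ 1)

/-- `^θI^ν`, the sequences `i` with `Σ (i_k + θ(i_k)) = ν`. -/
def ThetaSeq (ν : kˣ →₀ ℕ) (m : ℕ) : Type := {i : Fin m → kˣ // seqCond k ν i}

/-- The condition defining `I^ν` (for KLR algebras). -/
def seqCondA (ν : kˣ →₀ ℕ) {m : ℕ} (i : Fin m → kˣ) : Prop :=
  ν = ∑ l, Finsupp.single (i l) 1

/-- `I^ν` for the KLR algebra. -/
def SeqA (ν : kˣ →₀ ℕ) (m : ℕ) : Type := {i : Fin m → kˣ // seqCondA k ν i}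

lemma seqCond_mem_support {ν : kˣ →₀ ℕ} {m : ℕ} {i : Fin m → kˣ}
    (h : seqCond k ν i) (l : Fin m) : i l ∈ ν.support := by
  rw [Finsupp.mem_support_iff, h, Finsupp.finset_sum_apply]
  have hpos : 0 < ∑ l' : Fin m,
      ((Finsupp.single (i l') 1 + Finsupp.single (i l')⁻¹ 1 : kˣ →₀ ℕ) (i l)) := by
    refine Finset.sum_pos' (fun _ _ => Nat.zero_le _) ⟨l, Finset.mem_univ l, ?_⟩
    have h1 : ((Finsupp.single (i l) 1 : kˣ →₀ ℕ)) (i l) = 1 := Finsupp.single_eq_same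
    simp only [Finsupp.add_apply]
    omega
  omega

lemma seqCondA_mem_support {ν : kˣ →₀ ℕ} {m : ℕ} {i : Fin m → kˣ}
    (h : seqCondA k ν i) (l : Fin m) : i l ∈ ν.support := by
  rw [Finsupp.mem_support_iff, h, Finsupp.finset_sum_apply]
  have hpos : 0 < ∑ l' : Fin m, ((Finsupp.single (i l') 1 : kˣ →₀ ℕ) (i l)) := by
    refine Finset.sum_pos' (fun _ _ => Nat.zero_le _) ⟨l, Finset.mem_univ l, ?_⟩
    have h1 : ((Finsupp.single (i l) 1 : kˣ →₀ ℕ)) (i l) = 1 := Finsupp.single_eq_same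
    omega
  omega

instance {ν : kˣ →₀ ℕ} {m : ℕ} : Finite (ThetaSeq k ν m) := by
  refine Finite.of_injective
    (fun i : ThetaSeq k ν m => fun l : Fin m =>
      (⟨i.1 l, seqCond_mem_support k i.2 l⟩ : ν.support)) ?_
  intro a b hab
  apply Subtype.ext; funext l
  exact congrArg Subtype.val (congrFun hab l)

instance {ν : kˣ →₀ ℕ} {m : ℕ} : Finite (SeqA k ν m) := by
  refine Finite.of_injective
    (fun i : SeqA k ν m => fun l : Fin m =>
      (⟨i.1 l, seqCondA_mem_support k i.2 l⟩ : ν.support)) ?_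
  intro a b hab
  apply Subtype.ext; funext l
  exact congrArg Subtype.val (congrFun hab l)

noncomputable instance {ν : kˣ →₀ ℕ} {m : ℕ} : Fintype (ThetaSeq k ν m) := Fintype.ofFinite _
noncomputable instance {ν : kˣ →₀ ℕ} {m : ℕ} : Fintype (SeqA k ν m) := Fintype.ofFinite _

/-- position `k` for `σ_k`-type generators (0-indexed). -/
def c0 {m : ℕ} (c : Fin (m - 1)) : Fin m := ⟨c.1, by have := c.isLt; omega⟩
/-- position `k+1` for `σ_k`-type generators (0-indexed). -/
def c1 {m : ℕ} (c : Fin (m - 1)) : Fin m := ⟨c.1 + 1, by have := c.isLt; omega⟩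

/-- The action of the transposition `s_k` on sequences. -/
def swapT {m : ℕ} (c : Fin (m - 1)) (i : Fin m → kˣ) : Fin m → kˣ :=
  i ∘ Equiv.swap (c0 c) (c1 c)

lemma seqCond_swap {ν : kˣ →₀ ℕ} {m : ℕ} {c : Fin (m - 1)} {i : Fin m → kˣ}
    (h : seqCond k ν i) : seqCond k ν (swapT k c i) := by
  unfold seqCond at h ⊢
  rw [h]
  exact (Equiv.sum_comp (Equiv.swap (c0 c) (c1 c))
    (fun l => Finsupp.single (i l) 1 + Finsupp.single (i l)⁻¹ 1)).symm

lemma seqCondA_swap {ν : kˣ →₀ ℕ} {m : ℕ} {c : Fin (m - 1)} {i : Fin m → kˣ}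
    (h : seqCondA k ν i) : seqCondA k ν (swapT k c i) := by
  unfold seqCondA at h ⊢
  rw [h]
  exact (Equiv.sum_comp (Equiv.swap (c0 c) (c1 c)) (fun l => Finsupp.single (i l) 1)).symm

/-- The action of `π` on sequences: invert the first entry. -/
def flipT {m : ℕ} (hm : 0 < m) (i : Fin m → kˣ) : Fin m → kˣ :=
  Function.update i ⟨0, hm⟩ (i ⟨0, hm⟩)⁻¹

lemma seqCond_flip {ν : kˣ →₀ ℕ} {m : ℕ} (hm : 0 < m) {i : Fin m → kˣ}
    (h : seqCond k ν i) : seqCond k ν (flipT k hm i) := by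
  unfold seqCond at h ⊢
  rw [h]
  refine Finset.sum_congr rfl fun l _ => ?_
  rcases eq_or_ne l ⟨0, hm⟩ with hl | hl
  · subst hl; simp [flipT, inv_inv, add_comm]
  · simp [flipT, Function.update_of_ne hl]


/-! ## The VV algebras and KLR algebras, by generators and relations -/

/-- Generators of the VV algebra `W_ν` (with `|ν| = 2m`). -/
inductive Gen (ν : kˣ →₀ ℕ) (m : ℕ) : Type
  | e : ThetaSeq k ν m → Gen ν m
  | x : Fin m → Gen ν m
  | sig : Fin (m - 1) → Gen ν m
  | pii : 0 < m → Gen ν m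

/-- Generators of the KLR algebra `R_ν` (with `|ν| = m`). -/
inductive GenA (ν : kˣ →₀ ℕ) (m : ℕ) : Type
  | e : SeqA k ν m → GenA ν m
  | x : Fin m → GenA ν m
  | sig : Fin (m - 1) → GenA ν m

abbrev FW (ν : kˣ →₀ ℕ) (m : ℕ) := FreeAlgebra k (Gen k ν m)
abbrev FA (ν : kˣ →₀ ℕ) (m : ℕ) := FreeAlgebra k (GenA k ν m)

def fE {ν : kˣ →₀ ℕ} {m : ℕ} (i : ThetaSeq k ν m) : FW k ν m := FreeAlgebra.ι k (Gen.e i)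
def fX {ν : kˣ →₀ ℕ} {m : ℕ} (l : Fin m) : FW k ν m := FreeAlgebra.ι k (Gen.x l)
def fS {ν : kˣ →₀ ℕ} {m : ℕ} (c : Fin (m - 1)) : FW k ν m := FreeAlgebra.ι k (Gen.sig c)
def fP {ν : kˣ →₀ ℕ} {m : ℕ} (h : 0 < m) : FW k ν m := FreeAlgebra.ι k (Gen.pii h)

def gE {ν : kˣ →₀ ℕ} {m : ℕ} (i : SeqA k ν m) : FA k ν m := FreeAlgebra.ι k (GenA.e i)
def gX {ν : kˣ →₀ ℕ} {m : ℕ} (l : Fin m) : FA k ν m := FreeAlgebra.ι k (GenA.x l)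
def gS {ν : kˣ →₀ ℕ} {m : ℕ} (c : Fin (m - 1)) : FA k ν m := FreeAlgebra.ι k (GenA.sig c)

open Classical in
/-- The polynomial `Q_{a,b}(u,v)`. -/
def Qp {R : Type} [Ring R] (p a b : kˣ) (u v : R) : R :=
  if a = b then 0 else (-1 : R) ^ (nArr k p a b) * (u - v) ^ (nArr k p a b + nArr k p b a)

open Classical in
/-- The divided difference `(Q_{a,b}(x',x) - Q_{a,b}(x',x'')) / (x - x'')`, where
`A = x' - x` and `B = x' - x''`. -/
def dQ {R : Type} [Ring R] (p a b : kˣ) (A B : R) : R :=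
  if a = b then 0
  else -((-1 : R) ^ (nArr k p a b) *
      ∑ t ∈ Finset.range (nArr k p a b + nArr k p b a),
        A ^ t * B ^ (nArr k p a b + nArr k p b a - 1 - t))

open Classical in
/-- The defining relations of the VV algebra `W_ν` (in the setting `±p, ±q ∉ I`, so that
`π² e(i) = e(i)` and `(σ₁π)² e(i) = (πσ₁)² e(i)`). -/
inductive Rel (p : kˣ) (ν : kˣ →₀ ℕ) (m : ℕ) : FW k ν m → FW k ν m → Prop
  | ee (i j) : Rel p ν m (fE k i * fE k j) (if i = j then fE k i else 0)
  | sume : Rel p ν m (∑ i : ThetaSeq k ν m, fE k i) 1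
  | xe (l i) : Rel p ν m (fX k l * fE k i) (fE k i * fX k l)
  | xx (l l') : Rel p ν m (fX k l * fX k l') (fX k l' * fX k l)
  | se (c i) : Rel p ν m (fS k c * fE k i) (fE k ⟨swapT k c i.1, seqCond_swap k i.2⟩ * fS k c)
  | ss (c i) : Rel p ν m (fS k c * fS k c * fE k i)
      (Qp k p (i.1 (c0 c)) (i.1 (c1 c)) (fX k (c1 c)) (fX k (c0 c)) * fE k i)
  | scomm (c c' : Fin (m - 1)) (h : c.1 + 1 ≠ c'.1 ∧ c'.1 + 1 ≠ c.1) :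
      Rel p ν m (fS k c * fS k c') (fS k c' * fS k c)
  | braid (c c' : Fin (m - 1)) (h : c'.1 = c.1 + 1) (i) :
      Rel p ν m (fS k c' * fS k c * fS k c' * fE k i)
        (fS k c * fS k c' * fS k c * fE k i +
          (if i.1 (c0 c) = i.1 (c1 c') then
             dQ k p (i.1 (c0 c)) (i.1 (c1 c))
               (fX k (c1 c) - fX k (c0 c)) (fX k (c1 c) - fX k (c1 c'))
           else 0) * fE k i)
  | sx (c : Fin (m - 1)) (l : Fin m) (i) :
      Rel p ν m (fS k c * fX k l * fE k i)
        (fX k (Equiv.swap (c0 c) (c1 c) l) * fS k c * fE k i +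
          (if l = c0 c ∧ i.1 (c0 c) = i.1 (c1 c) then -(fE k i)
           else if l = c1 c ∧ i.1 (c0 c) = i.1 (c1 c) then fE k i else 0))
  | pe (h : 0 < m) (i) :
      Rel p ν m (fP k h * fE k i) (fE k ⟨flipT k h i.1, seqCond_flip k h i.2⟩ * fP k h)
  | px0 (h : 0 < m) : Rel p ν m (fP k h * fX k ⟨0, h⟩) (-(fX k ⟨0, h⟩ * fP k h))
  | px (h : 0 < m) (l : Fin m) (hl : l.1 ≠ 0) : Rel p ν m (fP k h * fX k l) (fX k l * fP k h)
  | ps (h : 0 < m) (c : Fin (m - 1)) (hc : c.1 ≠ 0) : Rel p ν m (fP k h * fS k c) (fS k c * fP k h)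
  | pp (h : 0 < m) (i) : Rel p ν m (fP k h * fP k h * fE k i) (fE k i)
  | pspsp (h : 0 < m) (c : Fin (m - 1)) (hc : c.1 = 0) (i) :
      Rel p ν m (fS k c * fP k h * (fS k c * fP k h) * fE k i)
                (fP k h * fS k c * (fP k h * fS k c) * fE k i)

open Classical in
/-- The defining relations of the KLR algebra `R_ν`. -/
inductive RelA (p : kˣ) (ν : kˣ →₀ ℕ) (m : ℕ) : FA k ν m → FA k ν m → Prop
  | ee (i j) : RelA p ν m (gE k i * gE k j) (if i = j then gE k i else 0)
  | sume : RelA p ν m (∑ i : SeqA k ν m, gE k i) 1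
  | xe (l i) : RelA p ν m (gX k l * gE k i) (gE k i * gX k l)
  | xx (l l') : RelA p ν m (gX k l * gX k l') (gX k l' * gX k l)
  | se (c i) : RelA p ν m (gS k c * gE k i) (gE k ⟨swapT k c i.1, seqCondA_swap k i.2⟩ * gS k c)
  | ss (c i) : RelA p ν m (gS k c * gS k c * gE k i)
      (Qp k p (i.1 (c0 c)) (i.1 (c1 c)) (gX k (c1 c)) (gX k (c0 c)) * gE k i)
  | scomm (c c' : Fin (m - 1)) (h : c.1 + 1 ≠ c'.1 ∧ c'.1 + 1 ≠ c.1) :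
      RelA p ν m (gS k c * gS k c') (gS k c' * gS k c)
  | braid (c c' : Fin (m - 1)) (h : c'.1 = c.1 + 1) (i) :
      RelA p ν m (gS k c' * gS k c * gS k c' * gE k i)
        (gS k c * gS k c' * gS k c * gE k i +
          (if i.1 (c0 c) = i.1 (c1 c') then
             dQ k p (i.1 (c0 c)) (i.1 (c1 c))
               (gX k (c1 c) - gX k (c0 c)) (gX k (c1 c) - gX k (c1 c'))
           else 0) * gE k i)
  | sx (c : Fin (m - 1)) (l : Fin m) (i) :
      RelA p ν m (gS k c * gX k l * gE k i)
        (gX k (Equiv.swap (c0 c) (c1 c) l) * gS k c * gE k i +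
          (if l = c0 c ∧ i.1 (c0 c) = i.1 (c1 c) then -(gE k i)
           else if l = c1 c ∧ i.1 (c0 c) = i.1 (c1 c) then gE k i else 0))

/-- The VV algebra `W_ν` with `|ν| = 2m`. -/
abbrev VA (p : kˣ) (ν : kˣ →₀ ℕ) (m : ℕ) : Type := RingQuot (Rel k p ν m)

/-- The KLR algebra `R_ν` with `|ν| = m`. -/
abbrev RA (p : kˣ) (ν : kˣ →₀ ℕ) (m : ℕ) : Type := RingQuot (RelA k p ν m)

def eW {p : kˣ} {ν : kˣ →₀ ℕ} {m : ℕ} (i : ThetaSeq k ν m) : VA k p ν m :=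
  RingQuot.mkAlgHom k (Rel k p ν m) (fE k i)
def xW {p : kˣ} {ν : kˣ →₀ ℕ} {m : ℕ} (l : Fin m) : VA k p ν m :=
  RingQuot.mkAlgHom k (Rel k p ν m) (fX k l)
def sW {p : kˣ} {ν : kˣ →₀ ℕ} {m : ℕ} (c : Fin (m - 1)) : VA k p ν m :=
  RingQuot.mkAlgHom k (Rel k p ν m) (fS k c)
def pW {p : kˣ} {ν : kˣ →₀ ℕ} {m : ℕ} (h : 0 < m) : VA k p ν m :=
  RingQuot.mkAlgHom k (Rel k p ν m) (fP k h)

def eR {p : kˣ} {ν : kˣ →₀ ℕ} {m : ℕ} (i : SeqA k ν m) : RA k p ν m :=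
  RingQuot.mkAlgHom k (RelA k p ν m) (gE k i)
def xR {p : kˣ} {ν : kˣ →₀ ℕ} {m : ℕ} (l : Fin m) : RA k p ν m :=
  RingQuot.mkAlgHom k (RelA k p ν m) (gX k l)
def sR {p : kˣ} {ν : kˣ →₀ ℕ} {m : ℕ} (c : Fin (m - 1)) : RA k p ν m :=
  RingQuot.mkAlgHom k (RelA k p ν m) (gS k c)


/-! ## The Weyl group of type B, realized as "mirror" permutations of `ℤ`
(commuting with `z ↦ 1 - z`), with negative positions labelled `0, -1, -2, …`,
the mirror of position `l` being `1 - l`. -/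

open Classical in
/-- The generator `s_a` of `W^B_m` (`a = 0` gives `s₀`, which swaps positions `1` and `0 = 1-1`;
`a = i ≥ 1` gives `s_i`, which swaps `i ↔ i+1` and `1-i ↔ -i`). -/
def sB (a : ℕ) : Equiv.Perm ℤ :=
  if a = 0 then Equiv.swap 0 1
  else Equiv.swap (a : ℤ) (a + 1) * Equiv.swap (1 - (a : ℤ)) (-(a : ℤ))

/-- The Weyl group `W^B_m` of type `B_m`, generated by `s₀, …, s_{m-1}`. -/
def WBgrp (m : ℕ) : Subgroup (Equiv.Perm ℤ) :=
  Subgroup.closure {g | ∃ a : Fin m, g = sB a.1}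

/-- The product of the generators along a word. -/
def wordB (m : ℕ) (l : List (Fin m)) : Equiv.Perm ℤ := (l.map fun a => sB a.1).prod

/-- `l` is a reduced expression for `w` in `W^B_m`. -/
def IsRedWord (m : ℕ) (w : Equiv.Perm ℤ) (l : List (Fin m)) : Prop :=
  wordB m l = w ∧ ∀ l' : List (Fin m), wordB m l' = w → l.length ≤ l'.length

/-- The length of `w ∈ W^B_m`. -/
def lenB (m : ℕ) (w : Equiv.Perm ℤ) : ℕ :=
  sInf {c | ∃ l : List (Fin m), l.length = c ∧ wordB m l = w}

/-- The symmetric group `S_{m}` (resp. various parabolic subgroups), inside `W^B`: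
the subgroup generated by the `s_a` with `a ∈ A`. -/
def subGrp (A : Set ℕ) : Subgroup (Equiv.Perm ℤ) :=
  Subgroup.closure {g | ∃ a ∈ A, g = sB a}

/-- The subgroup `S_m × S_n ≤ W^B_{m+n}` (also `≤ S_{m+n}`), generated by all
`s_a`, `1 ≤ a ≤ m+n-1`, except `s_m`. -/
def SmSn (m n : ℕ) : Subgroup (Equiv.Perm ℤ) :=
  subGrp {a | 1 ≤ a ∧ a ≤ m + n - 1 ∧ a ≠ m}

/-- The symmetric group `S_N ≤ W^B_N`, generated by `s_1, …, s_{N-1}`. -/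
def SgrpB (N : ℕ) : Subgroup (Equiv.Perm ℤ) := subGrp {a | 1 ≤ a ∧ a ≤ N - 1}

/-- Type A length: minimal length of a word in the generators `s_a`, `1 ≤ a ≤ N-1`. -/
def lenA (N : ℕ) (w : Equiv.Perm ℤ) : ℕ :=
  sInf {c | ∃ l : List (Fin N), (∀ a ∈ l, 1 ≤ a.1) ∧ l.length = c ∧ wordB N l = w}

/-- Minimal-length left coset representatives of `S_m × S_n` in `S_{m+n}`
(the set `𝔖_{m,n}`). -/
def DA (m n : ℕ) : Set (Equiv.Perm ℤ) :=
  {w | w ∈ SgrpB (m + n) ∧ ∀ h ∈ SmSn m n, lenA (m + n) w ≤ lenA (m + n) (w * h)}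

/-- Minimal-length left coset representatives of `S_m × S_n` in `W^B_{m+n}`
(the set `D(W^B_{m+n}/(S_m × S_n))`). -/
def DB (m n : ℕ) : Set (Equiv.Perm ℤ) :=
  {w | w ∈ WBgrp (m + n) ∧ ∀ h ∈ SmSn m n, lenB (m + n) w ≤ lenB (m + n) (w * h)}

/-- The image of the generator `s_a` in the VV algebra: `σ₀ := π`, `σ_a` for `a ≥ 1`. -/
def genW {p : kˣ} {ν : kˣ →₀ ℕ} {m : ℕ} (a : Fin m) : VA k p ν m :=
  if h : a.1 = 0 then pW k a.pos else sW k ⟨a.1 - 1, by have := a.isLt; omega⟩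

/-- `σ_w` for a word `w = s_{a₁} ⋯ s_{a_r}`. -/
def sigWord {p : kˣ} {ν : kˣ →₀ ℕ} {m : ℕ} (l : List (Fin m)) : VA k p ν m :=
  (l.map (genW k)).prod

open Classical in
/-- The intertwiner `φ_c` (`c` a 0-indexed `σ`-index) of the VV algebra. -/
def phiS {p : kˣ} {ν : kˣ →₀ ℕ} {m : ℕ} (c : Fin (m - 1)) : VA k p ν m :=
  ∑ i : ThetaSeq k ν m,
    (if i.1 (c0 c) = i.1 (c1 c) then sW k c * xW k (c0 c) - xW k (c0 c) * sW k c else sW k c) *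
      eW k i

/-- The intertwiner `φ_a` attached to the generator `s_a` of `W^B_m`: `φ₀ = π`. -/
def phiGen {p : kˣ} {ν : kˣ →₀ ℕ} {m : ℕ} (a : Fin m) : VA k p ν m :=
  if h : a.1 = 0 then pW k a.pos else phiS k ⟨a.1 - 1, by have := a.isLt; omega⟩

/-- `φ_w` along a word for `w`. -/
def phiWord {p : kˣ} {ν : kˣ →₀ ℕ} {m : ℕ} (l : List (Fin m)) : VA k p ν m :=
  (l.map (phiGen k)).prod

open Classical in
/-- The intertwiner `φ_c` of the KLR algebra. -/
def phiSA {p : kˣ} {ν : kˣ →₀ ℕ} {m : ℕ} (c : Fin (m - 1)) : RA k p ν m :=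
  ∑ i : SeqA k ν m,
    (if i.1 (c0 c) = i.1 (c1 c) then sR k c * xR k (c0 c) - xR k (c0 c) * sR k c else sR k c) *
      eR k i

/-- `φ_w` along a word of `σ`-indices, in the KLR algebra. -/
def phiWordA {p : kˣ} {ν : kˣ →₀ ℕ} {m : ℕ} (l : List (Fin (m - 1))) : RA k p ν m :=
  (l.map (phiSA k)).prod

open Classical in
/-- The signed variable `x_j`, `j ∈ ℤ`, with `x_{1-l} := -x_l` (0-indexed: `x_j = xW (j-1)`
for `1 ≤ j ≤ m`). -/
def xSigned (p : kˣ) (ν : kˣ →₀ ℕ) (m : ℕ) (j : ℤ) : VA k p ν m :=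
  if h : 1 ≤ j ∧ j ≤ (m : ℤ) then xW k ⟨(j - 1).toNat, by obtain ⟨h1, h2⟩ := h; omega⟩
  else if h' : 1 - (m : ℤ) ≤ j ∧ j ≤ 0 then -xW k ⟨(-j).toNat, by obtain ⟨h1, h2⟩ := h'; omega⟩
  else 0

open Classical in
/-- `σ_{|a|}` for a (possibly non-positive) index `a`, with `σ₀ := π`: for `a ≥ 1` this is
`σ_a`, for `a ≤ 0` it is `σ_{1-a-1} = σ_{-a}` (with `σ₀ = π` when `a = 0`). -/
def sigAbs (p : kˣ) (ν : kˣ →₀ ℕ) (m : ℕ) (a : ℤ) : VA k p ν m :=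
  if a = 0 then (if h : 0 < m then pW k h else 0)
  else if h : 1 ≤ a.natAbs ∧ a.natAbs ≤ m - 1 then sW k ⟨a.natAbs - 1, by obtain ⟨h1, h2⟩ := h; omega⟩
  else 0

/-- The block permutation exchanging the blocks `[o+1, o+a]` and `[o+a+1, o+a+b]` of positions,
extended mirror-symmetrically (`w(1-z) = 1-w(z)`). For `o = 0` this is `w[a,b] ∈ S_{a+b}`. -/
def wblkFun (o a b : ℕ) (z : ℤ) : ℤ :=
  if (o : ℤ) + 1 ≤ z ∧ z ≤ o + a then z + b
  else if (o : ℤ) + a + 1 ≤ z ∧ z ≤ o + a + b then z - a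
  else if 1 - (o : ℤ) - a ≤ z ∧ z ≤ -(o : ℤ) then z - b
  else if 1 - (o : ℤ) - a - b ≤ z ∧ z ≤ -(o : ℤ) - a then z + a
  else z

set_option maxHeartbeats 2000000 in
def wblk (o a b : ℕ) : Equiv.Perm ℤ where
  toFun := wblkFun o a b
  invFun := wblkFun o b a
  left_inv := by intro z; unfold wblkFun; split_ifs <;> omega
  right_inv := by intro z; unfold wblkFun; split_ifs <;> omega

end VVB

/-! Each intertwiner `φ_a` satisfies `φ_a x_j = x_{s_a(j)} φ_a` for every signed index `j`,
and the theorem follows by induction along the word. Both `j ↦ x_j` and `s_a` are compatible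
with the mirror `j ↦ 1 - j`, so only `j ∈ [1, m]` needs checking. There `φ₀ = π` is a defining
relation, while for `φ_c = (σ_c x_c - x_c σ_c) e(i)` the correction terms of `σ_c x_l e(i)`
commute with `x_c` and cancel in the commutator. -/

lemma commutator_mul_of_mul_eq {R : Type*} [Ring R] {S A X X' E D : R}
    (hX : Commute A X) (hX' : Commute A X') (hE : Commute A E) (hD : Commute A D)
    (h : S * X * E = X' * S * E + D) :
    (S * A - A * S) * X * E = X' * ((S * A - A * S) * E) := by
  have hSAXE : S * A * X * E = (S * X * E) * A := by
    rw [mul_assoc S A X, hX.eq, ← mul_assoc, mul_assoc _ A E, hE.eq, ← mul_assoc]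
  calc (S * A - A * S) * X * E = (S * X * E) * A - A * (S * X * E) := by
        rw [sub_mul, sub_mul, hSAXE]; noncomm_ring
    _ = X' * S * (E * A) - (A * X') * S * E + (D * A - A * D) := by rw [h]; noncomm_ring
    _ = X' * ((S * A - A * S) * E) := by rw [← hE.eq, hX'.eq, hD.eq, sub_self]; noncomm_ring

namespace VVB

variable {k : Type} [Field k] {p : kˣ} {ν : kˣ →₀ ℕ} {m : ℕ}

lemma commute_xW_eW (l : Fin m) (i : ThetaSeq k ν m) :
    Commute (xW k l : VA k p ν m) (eW k i) := by
  have h := RingQuot.mkAlgHom_rel k (Rel.xe (p := p) l i)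
  rwa [map_mul, map_mul] at h

lemma commute_xW_xW (l l' : Fin m) : Commute (xW k l : VA k p ν m) (xW k l') := by
  have h := RingQuot.mkAlgHom_rel k (Rel.xx (p := p) (ν := ν) l l')
  rwa [map_mul, map_mul] at h

lemma pW_mul_xW_zero (h : 0 < m) :
    (pW k h : VA k p ν m) * xW k ⟨0, h⟩ = -(xW k ⟨0, h⟩ * pW k h) := by
  have hrel := RingQuot.mkAlgHom_rel k (Rel.px0 (p := p) (ν := ν) h)
  rwa [map_mul, map_neg, map_mul] at hrel

lemma pW_mul_xW_of_ne_zero (h : 0 < m) (l : Fin m) (hl : l.1 ≠ 0) :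
    (pW k h : VA k p ν m) * xW k l = xW k l * pW k h := by
  have hrel := RingQuot.mkAlgHom_rel k (Rel.px (p := p) (ν := ν) h l hl)
  rwa [map_mul, map_mul] at hrel

open Classical in
lemma sW_mul_xW_mul_eW (c : Fin (m - 1)) (l : Fin m) (i : ThetaSeq k ν m) :
    (sW k c : VA k p ν m) * xW k l * eW k i =
      xW k (Equiv.swap (c0 c) (c1 c) l) * sW k c * eW k i +
      (if l = c0 c ∧ i.1 (c0 c) = i.1 (c1 c) then -(eW k i)
        else if l = c1 c ∧ i.1 (c0 c) = i.1 (c1 c) then eW k i else 0) := by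
  have h := RingQuot.mkAlgHom_rel k (Rel.sx (p := p) c l i)
  simp only [map_mul, map_add, apply_ite (RingQuot.mkAlgHom k (Rel k p ν m)), map_neg,
    map_zero] at h
  exact h

lemma phiS_mul_xW (c : Fin (m - 1)) (l : Fin m) :
    (phiS k c : VA k p ν m) * xW k l = xW k (Equiv.swap (c0 c) (c1 c) l) * phiS k c := by
  classical
  rw [phiS, Finset.sum_mul, Finset.mul_sum]
  refine Finset.sum_congr rfl fun i _ => ?_
  have hsx := sW_mul_xW_mul_eW (p := p) c l i
  rw [mul_assoc, ← (commute_xW_eW l i).eq, ← mul_assoc]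
  split_ifs with hi
  · rw [← mul_assoc]
    refine (commutator_mul_of_mul_eq (commute_xW_xW _ _) (commute_xW_xW _ _)
      (commute_xW_eW _ _) ?_ hsx).trans (mul_assoc _ _ _).symm
    split_ifs
    exacts [(commute_xW_eW _ _).neg_right, commute_xW_eW _ _, Commute.zero_right _]
  · rw [if_neg (fun h => hi h.2), if_neg (fun h => hi h.2), add_zero] at hsx
    rw [hsx, mul_assoc]

lemma xSigned_val_add_one (l : Fin m) : xSigned k p ν m ((l : ℤ) + 1) = xW k l := by
  rw [xSigned, dif_pos (by omega)]
  congr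
  omega

lemma xSigned_one_sub (j : ℤ) : xSigned k p ν m (1 - j) = -xSigned k p ν m j := by
  unfold xSigned
  split_ifs <;> try omega
  · rw [neg_neg]
    congr 2
    omega
  · congr 3
    omega
  · exact neg_zero.symm

lemma xSigned_of_lt {j : ℤ} (h : (m : ℤ) < j) : xSigned k p ν m j = 0 := by
  rw [xSigned, dif_neg (by omega), dif_neg (by omega)]

lemma sB_one_sub (a : ℕ) (j : ℤ) : sB a (1 - j) = 1 - sB a j := by
  unfold sB
  split_ifs <;> simp only [Equiv.Perm.mul_apply, Equiv.swap_apply_def] <;> split_ifs <;> omega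

lemma sB_apply_of_lt {a : ℕ} {j : ℤ} (h : (a : ℤ) + 1 < j) : sB a j = j := by
  unfold sB
  split_ifs <;> simp only [Equiv.Perm.mul_apply, Equiv.swap_apply_def] <;> split_ifs <;> omega

lemma sB_succ_apply_val_add_one (c : Fin (m - 1)) (l : Fin m) :
    sB (c.1 + 1) ((l : ℤ) + 1) = (Equiv.swap (c0 c) (c1 c) l : ℤ) + 1 := by
  simp only [sB, Nat.add_one_ne_zero, if_false, Equiv.Perm.mul_apply, Equiv.swap_apply_def,
    Fin.ext_iff, c0, c1]
  split_ifs <;> push_cast <;> omega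

lemma pW_mul_xW (h : 0 < m) (l : Fin m) :
    (pW k h : VA k p ν m) * xW k l = xSigned k p ν m (sB 0 ((l : ℤ) + 1)) * pW k h := by
  rcases eq_or_ne l.1 0 with hl | hl
  · have hs : sB 0 ((l : ℤ) + 1) = 1 - ((l : ℤ) + 1) := by simp [sB, hl]
    rw [hs, xSigned_one_sub, xSigned_val_add_one]
    obtain rfl : l = ⟨0, h⟩ := Fin.ext hl
    -- `neg_mul` needs explicit arguments: `*` on `VA` comes from `FreeAlgebra`'s semiring
    -- instance and `-` from its ring instance, which `rw` and `simp` do not unify.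
    exact (pW_mul_xW_zero h).trans (neg_mul (xW k ⟨0, h⟩) (pW k h)).symm
  · have hs : sB 0 ((l : ℤ) + 1) = (l : ℤ) + 1 := sB_apply_of_lt (by omega)
    rw [hs, xSigned_val_add_one, pW_mul_xW_of_ne_zero h l hl]

lemma phiGen_mul_xW (a l : Fin m) :
    (phiGen k a : VA k p ν m) * xW k l = xSigned k p ν m (sB a ((l : ℤ) + 1)) * phiGen k a := by
  unfold phiGen
  split_ifs with ha
  · rw [ha]
    exact pW_mul_xW a.pos l
  · obtain ⟨c, rfl⟩ : ∃ c : Fin (m - 1), a = ⟨c.1 + 1, by omega⟩ :=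
      ⟨⟨a.1 - 1, by omega⟩, Fin.ext (by simp only; omega)⟩
    rw [sB_succ_apply_val_add_one c l, xSigned_val_add_one]
    exact phiS_mul_xW c l

lemma phiGen_mul_xSigned (a : Fin m) (j : ℤ) :
    (phiGen k a : VA k p ν m) * xSigned k p ν m j = xSigned k p ν m (sB a j) * phiGen k a := by
  have hpos : ∀ j : ℤ, 1 ≤ j →
      (phiGen k a : VA k p ν m) * xSigned k p ν m j = xSigned k p ν m (sB a j) * phiGen k a := by
    intro j hj
    rcases le_or_gt j m with hjm | hjm
    · obtain ⟨l, rfl⟩ : ∃ l : Fin m, j = (l : ℤ) + 1 := ⟨⟨(j - 1).toNat, by omega⟩, by dsimp only; omega⟩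
      rw [xSigned_val_add_one, phiGen_mul_xW]
    · rw [sB_apply_of_lt (by omega), xSigned_of_lt hjm, mul_zero, zero_mul]
  rcases le_or_gt 1 j with hj | hj
  · exact hpos j hj
  · have h := hpos (1 - j) (by omega)
    rw [sB_one_sub, xSigned_one_sub, xSigned_one_sub] at h
    exact neg_inj.mp ((mul_neg (phiGen k a) _).symm.trans (h.trans (neg_mul _ (phiGen k a))))

lemma phiWord_mul_xSigned (l : List (Fin m)) (j : ℤ) :
    (phiWord k l : VA k p ν m) * xSigned k p ν m j =
      xSigned k p ν m (wordB m l j) * phiWord k l := by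
  induction l with
  | nil => simp [phiWord, wordB]
  | cons a t ih =>
    simp only [phiWord, wordB, List.map_cons, List.prod_cons, Equiv.Perm.mul_apply] at ih ⊢
    rw [mul_assoc, ih, ← mul_assoc, phiGen_mul_xSigned, mul_assoc]

theorem intertwiner_mul_x_general (k : Type) [Field k] (p : kˣ) (ν : kˣ →₀ ℕ) (m : ℕ)
    (w : Equiv.Perm ℤ) (l : List (Fin m)) (hl : IsRedWord m w l) (κ : Fin m) :
    phiWord k l * xW k κ = (xSigned k p ν m (w ((κ.1 : ℤ) + 1)) * phiWord k l : VA k p ν m) := by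
  rw [← xSigned_val_add_one, phiWord_mul_xSigned, hl.1]

/-- For every `w ∈ W^B_m` and `1 ≤ κ ≤ m` (here 0-indexed by `κ : Fin m`,
so that the paper's position is `κ + 1`), the identity `φ_w x_κ = x_{w(κ)} φ_w` holds in the
VV algebra `W_ν`, where `W^B_m` acts on indices as signed permutations and `x_{1-l} := -x_l`
for the non-positive indices. -/
theorem intertwiner_mul_x (k : Type) [Field k] (p q lam : kˣ)
    (hset : Setting k p q lam) (ν : kˣ →₀ ℕ) (hν : ν ∈ ThetaNNI k p lam)
    (m : ℕ) (hm : ht k ν = 2 * m)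
    (w : Equiv.Perm ℤ) (hw : w ∈ WBgrp m) (l : List (Fin m)) (hl : IsRedWord m w l)
    (κ : Fin m) :
    phiWord k l * xW k κ = (xSigned k p ν m (w ((κ.1 : ℤ) + 1)) * phiWord k l : VA k p ν m) :=
  intertwiner_mul_x_general k p ν m w l hl κ

end VVB
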